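/- arXiv:2206.10660 — 2 statements merged into one kernel-verified Lean document; each statement's English description precedes it below -/
import Mathlib

section
/- For budget B = 3, the gain of overlaps is at most 7/3, and for budget B = 4 it is at most 15/4. More generally, partitioning the individuals pooled by an optimal overlapping regime with B tests according to the nonempty subset of tests containing them yields at most 2^B − 1 classes, and using the B classes of highest value q_S · Σ_{i∈S} u_i as disjoint tests gives a non-overlapping regime whose welfare is at least B/(2^B − 1) times the optimal overlapping welfare. -/
/-!
Group the pooled individuals by the set of tests containing them. A negative test containing `i`
contains the whole class of `i`, so the welfare of any regime is at most the sum, over the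
`2 ^ B - 1` nonempty membership patterns, of the stand-alone welfare of the corresponding class.
These classes are pairwise disjoint and each lies inside some test, so the `B` most valuable of
them form an admissible non-overlapping regime, and they carry at least a `B / (2 ^ B - 1)` share
of that sum.
-/

open Finset

/-- Probability of a health realization `ω` (true = healthy) under independent
healthy-probabilities `q`. -/
noncomputable def healthProb {n : ℕ} (q : Fin n → ℝ) (ω : Fin n → Bool) : ℝ :=
  ∏ i, if ω i then q i else 1 - q i

/-- Probability that individual `i` lies in at least one negative test of the regime `T`. -/
noncomputable def inNegProb {n B : ℕ} (q : Fin n → ℝ) (T : Fin B → Finset (Fin n))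
    (i : Fin n) : ℝ :=
  ∑ ω : Fin n → Bool,
    if ∃ j, i ∈ T j ∧ ∀ k ∈ T j, ω k = true then healthProb q ω else 0

/-- Expected welfare of a (possibly overlapping) testing regime `T`. -/
noncomputable def welfare {n B : ℕ} (q u : Fin n → ℝ) (T : Fin B → Finset (Fin n)) : ℝ :=
  ∑ i, u i * inNegProb q T i

/-- Stand-alone expected welfare of a single pooled test `t`. -/
noncomputable def testWelfare {n : ℕ} (q u : Fin n → ℝ) (t : Finset (Fin n)) : ℝ :=
  (∏ i ∈ t, q i) * ∑ i ∈ t, u i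

/-- Welfare of a non-overlapping testing regime, as a sum of stand-alone test welfares. -/
noncomputable def noWelfare {n B : ℕ} (q u : Fin n → ℝ) (T : Fin B → Finset (Fin n)) : ℝ :=
  ∑ j, testWelfare q u (T j)

/-- Probability that test `T j` is pivotal for individual `i`: `i ∈ T j`, test `T j` is
negative, and every earlier test containing `i` is positive. -/
noncomputable def pivotalProb {n B : ℕ} (q : Fin n → ℝ) (T : Fin B → Finset (Fin n))
    (i : Fin n) (j : Fin B) : ℝ :=
  ∑ ω : Fin n → Bool,
    if i ∈ T j ∧ (∀ k ∈ T j, ω k = true) ∧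
        (∀ j' : Fin B, j' < j → i ∈ T j' → ∃ k ∈ T j', ω k = false)
      then healthProb q ω else 0

section HealthProb

variable {n : ℕ} {q : Fin n → ℝ}

lemma healthProb_nonneg (hq : ∀ i, 0 ≤ q i ∧ q i ≤ 1) (ω : Fin n → Bool) :
    0 ≤ healthProb q ω :=
  Finset.prod_nonneg fun i _ => by
    cases ω i
    · simpa using (hq i).2
    · simpa using (hq i).1

lemma sum_ite_healthProb_le_of_imp (hq : ∀ i, 0 ≤ q i ∧ q i ≤ 1)
    {P₁ P₂ : (Fin n → Bool) → Prop} [DecidablePred P₁] [DecidablePred P₂]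
    (h : ∀ ω, P₁ ω → P₂ ω) :
    ∑ ω, (if P₁ ω then healthProb q ω else 0) ≤
      ∑ ω, if P₂ ω then healthProb q ω else 0 :=
  Finset.sum_le_sum fun ω _ => by
    by_cases h₁ : P₁ ω
    · rw [if_pos h₁, if_pos (h ω h₁)]
    · rw [if_neg h₁]
      split_ifs
      exacts [healthProb_nonneg hq ω, le_rfl]

/-- Expanding the product over individuals: the coordinates outside `S` sum to `1`. -/
lemma sum_healthProb_forall_mem_eq_prod (q : Fin n → ℝ) (S : Finset (Fin n)) :
    ∑ ω, (if ∀ k ∈ S, ω k = true then healthProb q ω else 0) = ∏ k ∈ S, q k := by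
  let f : Fin n → Bool → ℝ := fun i b =>
    if i ∈ S then (if b then q i else 0) else (if b then q i else 1 - q i)
  have h_ite : ∀ ω : Fin n → Bool,
      (if ∀ k ∈ S, ω k = true then healthProb q ω else 0) = ∏ i, f i (ω i) := by
    intro ω
    split_ifs with hω
    · refine Finset.prod_congr rfl fun i _ => ?_
      by_cases hi : i ∈ S <;> simp [f, hi, hω]
    · push Not at hω
      obtain ⟨k, hkS, hk⟩ := hω
      exact (Finset.prod_eq_zero (Finset.mem_univ k) (by simp [f, hkS, hk])).symm
  have h_sum : ∀ i, ∑ b, f i b = if i ∈ S then q i else 1 := by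
    intro i
    by_cases hi : i ∈ S <;> simp [f, hi]
  simp only [h_ite, ← Fintype.prod_sum, h_sum, Finset.prod_ite_mem, Finset.univ_inter]

end HealthProb

/-- Dropping a minimal element of `P` keeps the average over `Q` above the average over `P`. -/
lemma Finset.exists_subset_card_eq_mul_sum_le {ι : Type*} [DecidableEq ι] (v : ι → ℝ)
    {k : ℕ} {P : Finset ι} (hk : k ≤ P.card) :
    ∃ Q ⊆ P, Q.card = k ∧ (k : ℝ) * ∑ x ∈ P, v x ≤ P.card * ∑ x ∈ Q, v x := by
  obtain ⟨m, hm⟩ := Nat.exists_eq_add_of_le hk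
  clear hk
  induction m generalizing P with
  | zero => exact ⟨P, subset_rfl, hm, by rw [hm, add_zero, mul_comm]⟩
  | succ m ih =>
    obtain ⟨a, haP, ha_min⟩ := P.exists_min_image v (Finset.card_pos.1 (by omega))
    obtain ⟨Q, hQ, hQk, hQsum⟩ :=
      ih (P := P.erase a) (by rw [Finset.card_erase_of_mem haP]; omega)
    refine ⟨Q, hQ.trans (P.erase_subset a), hQk, ?_⟩
    have h_min : (k : ℝ) * v a ≤ ∑ x ∈ Q, v x := by
      simpa [hQk] using Finset.card_nsmul_le_sum Q v (v a)
        fun x hx => ha_min x (Finset.mem_of_mem_erase (hQ hx))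
    have hP : (P.card : ℝ) = (P.erase a).card + 1 := by
      exact_mod_cast (Finset.card_erase_add_one haP).symm
    rw [← Finset.add_sum_erase P v haP, hP]
    linarith

section Pattern

variable {ι α : Type*} [Fintype ι] [DecidableEq α]

def testsContaining (T : ι → Finset α) (i : α) : Finset ι :=
  {j | i ∈ T j}

def patternClass [DecidableEq ι] [Fintype α] (T : ι → Finset α) (p : Finset ι) : Finset α :=
  {i | testsContaining T i = p}

variable {T : ι → Finset α}

@[simp]
lemma mem_testsContaining {i : α} {j : ι} : j ∈ testsContaining T i ↔ i ∈ T j := by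
  simp [testsContaining]

section Class

variable [DecidableEq ι] [Fintype α]

@[simp]
lemma mem_patternClass {p : Finset ι} {i : α} :
    i ∈ patternClass T p ↔ testsContaining T i = p := by
  simp [patternClass]

lemma patternClass_subset {p : Finset ι} {j : ι} (hj : j ∈ p) : patternClass T p ⊆ T j :=
  fun _ hi => mem_testsContaining.1 (mem_patternClass.1 hi ▸ hj)

lemma disjoint_patternClass {p p' : Finset ι} (h : p ≠ p') :
    Disjoint (patternClass T p) (patternClass T p') :=
  Finset.disjoint_left.2 fun _ hi hi' =>
    h ((mem_patternClass.1 hi).symm.trans (mem_patternClass.1 hi'))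

end Class

end Pattern

section Welfare

variable {n B : ℕ} {q u : Fin n → ℝ}

lemma inNegProb_nonneg (hq : ∀ i, 0 ≤ q i ∧ q i ≤ 1) (T : Fin B → Finset (Fin n))
    (i : Fin n) : 0 ≤ inNegProb q T i :=
  Finset.sum_nonneg fun ω _ => by
    split_ifs
    exacts [healthProb_nonneg hq ω, le_rfl]

lemma inNegProb_eq_zero_of_testsContaining_eq_empty {T : Fin B → Finset (Fin n)} {i : Fin n}
    (hi : testsContaining T i = ∅) : inNegProb q T i = 0 :=
  Finset.sum_eq_zero fun ω _ => if_neg fun ⟨j, hij, _⟩ => by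
    simpa [hi] using mem_testsContaining.2 hij

lemma inNegProb_le_prod_patternClass (hq : ∀ i, 0 ≤ q i ∧ q i ≤ 1)
    (T : Fin B → Finset (Fin n)) (i : Fin n) :
    inNegProb q T i ≤ ∏ k ∈ patternClass T (testsContaining T i), q k := by
  rw [inNegProb, ← sum_healthProb_forall_mem_eq_prod]
  refine sum_ite_healthProb_le_of_imp hq fun ω ⟨j, hij, hneg⟩ k hk => hneg k ?_
  exact patternClass_subset (mem_testsContaining.2 hij) hk

lemma prod_le_inNegProb (hq : ∀ i, 0 ≤ q i ∧ q i ≤ 1) {T : Fin B → Finset (Fin n)}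
    {i : Fin n} {j : Fin B} (hij : i ∈ T j) : ∏ k ∈ T j, q k ≤ inNegProb q T i := by
  rw [inNegProb, ← sum_healthProb_forall_mem_eq_prod]
  exact sum_ite_healthProb_le_of_imp hq fun ω hneg => ⟨j, hij, hneg⟩

lemma welfare_le_sum_testWelfare_patternClass (hq : ∀ i, 0 ≤ q i ∧ q i ≤ 1)
    (hu : ∀ i, 0 ≤ u i) (T : Fin B → Finset (Fin n)) :
    welfare q u T ≤ ∑ p ∈ Finset.univ.erase ∅, testWelfare q u (patternClass T p) := by
  have h_fiber (p : Finset (Fin B)) :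
      ∑ i ∈ patternClass T p, u i * inNegProb q T i ≤ testWelfare q u (patternClass T p) := by
    rw [testWelfare, mul_comm, Finset.sum_mul]
    refine Finset.sum_le_sum fun i hi => mul_le_mul_of_nonneg_left ?_ (hu i)
    simpa [mem_patternClass.1 hi] using inNegProb_le_prod_patternClass hq T i
  have h_empty : ∑ i ∈ patternClass T ∅, u i * inNegProb q T i = 0 :=
    Finset.sum_eq_zero fun i hi => by
      rw [inNegProb_eq_zero_of_testsContaining_eq_empty (mem_patternClass.1 hi), mul_zero]
  calc welfare q u T = ∑ p, ∑ i ∈ patternClass T p, u i * inNegProb q T i :=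
        (Finset.sum_fiberwise _ _ _).symm
    _ = ∑ p ∈ Finset.univ.erase ∅, ∑ i ∈ patternClass T p, u i * inNegProb q T i := by
        rw [← Finset.add_sum_erase _ _ (Finset.mem_univ ∅), h_empty, zero_add]
    _ ≤ _ := Finset.sum_le_sum fun p _ => h_fiber p

lemma noWelfare_le_welfare (hq : ∀ i, 0 ≤ q i ∧ q i ≤ 1) (hu : ∀ i, 0 ≤ u i)
    {T : Fin B → Finset (Fin n)} (hT : ∀ j k, j ≠ k → Disjoint (T j) (T k)) :
    noWelfare q u T ≤ welfare q u T := by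
  have h_test (j : Fin B) : testWelfare q u (T j) ≤ ∑ i ∈ T j, u i * inNegProb q T i := by
    rw [testWelfare, mul_comm, Finset.sum_mul]
    exact Finset.sum_le_sum fun i hi => mul_le_mul_of_nonneg_left (prod_le_inNegProb hq hi) (hu i)
  calc noWelfare q u T ≤ ∑ j, ∑ i ∈ T j, u i * inNegProb q T i :=
        Finset.sum_le_sum fun j _ => h_test j
    _ = ∑ i ∈ Finset.univ.biUnion T, u i * inNegProb q T i :=
        (Finset.sum_biUnion fun j _ k _ hjk => hT j k hjk).symm
    _ ≤ welfare q u T := Finset.sum_le_sum_of_subset_of_nonneg (Finset.subset_univ _)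
        fun i _ _ => mul_nonneg (hu i) (inNegProb_nonneg hq T i)

end Welfare

section Regime

variable {n B : ℕ} {q u : Fin n → ℝ}

lemma exists_disjoint_noWelfare_eq_sum_patternClass {G : ℕ} {T : Fin B → Finset (Fin n)}
    (hT : ∀ j, (T j).card ≤ G) {Q : Finset (Finset (Fin B))} (hQ : Q.card = B)
    (hQ_empty : ∅ ∉ Q) :
    ∃ T' : Fin B → Finset (Fin n),
      (∀ j k, j ≠ k → Disjoint (T' j) (T' k)) ∧ (∀ j, (T' j).card ≤ G) ∧
        noWelfare q u T' = ∑ p ∈ Q, testWelfare q u (patternClass T p) := by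
  let e : Fin B ≃ Q := (Q.equivFin.trans (finCongr hQ)).symm
  refine ⟨fun j => patternClass T (e j), fun j k hjk => disjoint_patternClass ?_,
    fun j => ?_, ?_⟩
  · exact fun h => hjk (e.injective (Subtype.val_injective h))
  · obtain ⟨j', hj'⟩ := Finset.nonempty_iff_ne_empty.2 fun h => hQ_empty (h ▸ (e j).2)
    exact (Finset.card_le_card (patternClass_subset hj')).trans (hT j')
  · rw [noWelfare, ← Finset.sum_coe_sort Q]
    exact e.sum_comp fun p : Q => testWelfare q u (patternClass T p)

theorem exists_disjoint_mul_welfare_le (hq : ∀ i, 0 ≤ q i ∧ q i ≤ 1) (hu : ∀ i, 0 ≤ u i)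
    {G : ℕ} (T : Fin B → Finset (Fin n)) (hT : ∀ j, (T j).card ≤ G) :
    ∃ T' : Fin B → Finset (Fin n),
      (∀ j k, j ≠ k → Disjoint (T' j) (T' k)) ∧ (∀ j, (T' j).card ≤ G) ∧
        (B : ℝ) * welfare q u T ≤ (2 ^ B - 1) * welfare q u T' := by
  set P : Finset (Finset (Fin B)) := Finset.univ.erase ∅
  have hP : P.card = 2 ^ B - 1 := by simp [P, Finset.card_erase_of_mem]
  obtain ⟨Q, hQP, hQ, hQ_sum⟩ := Finset.exists_subset_card_eq_mul_sum_le
    (fun p => testWelfare q u (patternClass T p)) (k := B) (P := P)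
    (by have := Nat.lt_two_pow_self (n := B); omega)
  obtain ⟨T', hT'_disj, hT'_card, hT'_welfare⟩ := exists_disjoint_noWelfare_eq_sum_patternClass
    (q := q) (u := u) hT hQ fun h => Finset.notMem_erase ∅ _ (hQP h)
  have hP_cast : (P.card : ℝ) = 2 ^ B - 1 := by
    rw [hP, Nat.cast_sub Nat.one_le_two_pow]; push_cast; ring
  refine ⟨T', hT'_disj, hT'_card, ?_⟩
  calc (B : ℝ) * welfare q u T
      ≤ B * ∑ p ∈ P, testWelfare q u (patternClass T p) :=
        mul_le_mul_of_nonneg_left (welfare_le_sum_testWelfare_patternClass hq hu T) B.cast_nonneg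
    _ ≤ (2 ^ B - 1) * noWelfare q u T' := by rw [hT'_welfare, ← hP_cast]; exact hQ_sum
    _ ≤ (2 ^ B - 1) * welfare q u T' :=
        mul_le_mul_of_nonneg_left (noWelfare_le_welfare hq hu hT'_disj)
          (by rw [← hP_cast]; exact P.card.cast_nonneg)

end Regime

/-- The gain of overlaps is at most 7/3 for budget 3 and at most 15/4 for budget 4;
more generally, for any budget `B ≥ 1`, every (possibly overlapping) regime is
outperformed, up to a factor `(2^B - 1)/B`, by some non-overlapping regime. -/
theorem stmt7 :
    ∀ (n G : ℕ) (q u : Fin n → ℝ),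
      (∀ i, 0 ≤ q i ∧ q i ≤ 1) → (∀ i, 0 ≤ u i) →
      ((∀ T : Fin 3 → Finset (Fin n), (∀ j, (T j).card ≤ G) →
          ∃ T' : Fin 3 → Finset (Fin n),
            (∀ j k, j ≠ k → Disjoint (T' j) (T' k)) ∧ (∀ j, (T' j).card ≤ G) ∧
              welfare q u T ≤ (7 / 3) * welfare q u T') ∧
        (∀ T : Fin 4 → Finset (Fin n), (∀ j, (T j).card ≤ G) →
          ∃ T' : Fin 4 → Finset (Fin n),
            (∀ j k, j ≠ k → Disjoint (T' j) (T' k)) ∧ (∀ j, (T' j).card ≤ G) ∧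
              welfare q u T ≤ (15 / 4) * welfare q u T') ∧
        (∀ B : ℕ, 1 ≤ B → ∀ T : Fin B → Finset (Fin n), (∀ j, (T j).card ≤ G) →
          ∃ T' : Fin B → Finset (Fin n),
            (∀ j k, j ≠ k → Disjoint (T' j) (T' k)) ∧ (∀ j, (T' j).card ≤ G) ∧
              (B : ℝ) * welfare q u T ≤ ((2 : ℝ) ^ B - 1) * welfare q u T')) := by
  intro n G q u hq hu
  refine ⟨fun T hT => ?_, fun T hT => ?_,
    fun B _ T hT => exists_disjoint_mul_welfare_le hq hu T hT⟩
  · obtain ⟨T', hT'_disj, hT'_card, h⟩ := exists_disjoint_mul_welfare_le hq hu T hT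
    exact ⟨T', hT'_disj, hT'_card, by norm_num at h; linarith⟩
  · obtain ⟨T', hT'_disj, hT'_card, h⟩ := exists_disjoint_mul_welfare_le hq hu T hT
    exact ⟨T', hT'_disj, hT'_card, by norm_num at h; linarith⟩
end

section
/- Suppose the welfares of two single tests on disjoint pools A (with aggregate utility u_A, healthy probability q_A), B (u_B, q_B), and a common pool C (u_C, q_C) are considered with budget B=2. For the overlapping regime T* = (A∪C, B∪C), the welfare is q_C(q_A u_A + q_B u_B + (q_A + (1−q_A)q_B) u_C). For each of the four non-overlapping alternatives T^1=(A∪C, B), T^2=(A, C), T^3=(B, C), T^4=(A∪B, C), the ratio u(T*)/u(T^k) is a non-decreasing function of q_C on [0,1]; hence the worst-case ratio is attained at q_C = 1. -/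
open Finset

/-!
Under independence, the probability that every member of a pool `S` is healthy is
`∏ i ∈ S, q i`, and by inclusion–exclusion the probability that `S` or `T` is all healthy is
`q_S + q_T - q_{S ∪ T}`. A member of `C` is served when either test is negative, which gives
`q_C (q_A + (1 - q_A) q_B)`; members of `A` and `B` are served only by their own test.

For the ratios, the overlapping welfare is `q_C K` with `K ≥ 0`, while each alternative's
welfare is `a + b q_C` with `a, b ≥ 0`, and `x ↦ x K / (a + b x)` is non-decreasing on
`[0, ∞)`: its derivative has the sign of `a K`.
-/

lemma sum_healthProb_allHealthy {n : ℕ} (q : Fin n → ℝ) (S : Finset (Fin n)) :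
    (∑ ω : Fin n → Bool, if ∀ k ∈ S, ω k = true then healthProb q ω else 0) =
      ∏ i ∈ S, q i := by
  set g : Fin n → Bool → ℝ := fun i b =>
    if i ∈ S → b = true then (if b then q i else 1 - q i) else 0
  -- The indicator factorizes coordinatewise, so the sum over realizations is a product of
  -- one-coordinate marginals.
  have hindicator : ∀ ω : Fin n → Bool,
      (if ∀ k ∈ S, ω k = true then healthProb q ω else 0) = ∏ i, g i (ω i) := by
    intro ω
    simp [g, Fintype.prod_ite_zero, healthProb]
  have hmarginal : ∀ i, ∑ b, g i b = if i ∈ S then q i else 1 := by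
    intro i
    by_cases hi : i ∈ S <;> simp [g, hi]
  simp_rw [hindicator, ← Fintype.prod_sum, hmarginal, prod_ite_mem, univ_inter]

lemma ite_or_eq_add_sub {α : Type*} [AddCommGroup α] (P Q : Prop) [Decidable P] [Decidable Q]
    (x : α) :
    (if P ∨ Q then x else 0) =
      (if P then x else 0) + (if Q then x else 0) - (if P ∧ Q then x else 0) := by
  by_cases hP : P <;> by_cases hQ : Q <;> simp [hP, hQ]

lemma sum_healthProb_allHealthy_or {n : ℕ} (q : Fin n → ℝ) (S T : Finset (Fin n)) :
    (∑ ω : Fin n → Bool,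
        if (∀ k ∈ S, ω k = true) ∨ (∀ k ∈ T, ω k = true) then healthProb q ω else 0) =
      ∏ i ∈ S, q i + ∏ i ∈ T, q i - ∏ i ∈ S ∪ T, q i := by
  have hincl_excl : ∀ ω : Fin n → Bool,
      (if (∀ k ∈ S, ω k = true) ∨ (∀ k ∈ T, ω k = true) then healthProb q ω else 0) =
        (if ∀ k ∈ S, ω k = true then healthProb q ω else 0) +
          (if ∀ k ∈ T, ω k = true then healthProb q ω else 0) -
          (if ∀ k ∈ S ∪ T, ω k = true then healthProb q ω else 0) := by
    intro ω
    simp only [forall_mem_union]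
    exact ite_or_eq_add_sub _ _ _
  simp_rw [hincl_excl, sum_sub_distrib, sum_add_distrib, sum_healthProb_allHealthy]

lemma monotoneOn_mul_div_add_mul (K a b : ℝ) (hK : 0 ≤ K) (ha : 0 ≤ a) (hb : 0 ≤ b) :
    MonotoneOn (fun c => c * K / (a + b * c)) (Set.Ici 0) := by
  intro c hc c' _ hcc'
  simp only [Set.mem_Ici] at hc
  rcases (by positivity : 0 ≤ a + b * c).eq_or_lt with hzero | hpos
  · simp only [← hzero, div_zero]
    have : 0 ≤ c' := hc.trans hcc'
    positivity
  · have hpos' : 0 < a + b * c' := hpos.trans_le (by gcongr)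
    rw [div_le_div_iff₀ hpos hpos']
    -- after cross-multiplying, the `b c c' K` terms cancel, leaving `K a (c' - c) ≥ 0`
    nlinarith [mul_nonneg (mul_nonneg hK ha) (sub_nonneg.2 hcc')]

section PairOfTests

variable {n : ℕ} (q : Fin n → ℝ) {s t : Finset (Fin n)} {i : Fin n}

lemma inNegProb_pair :
    inNegProb q ![s, t] i =
      ∑ ω : Fin n → Bool,
        if (i ∈ s ∧ ∀ k ∈ s, ω k = true) ∨ (i ∈ t ∧ ∀ k ∈ t, ω k = true)
          then healthProb q ω else 0 := by
  simp [inNegProb, Fin.exists_fin_two]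

lemma inNegProb_pair_of_mem_of_notMem (hs : i ∈ s) (ht : i ∉ t) :
    inNegProb q ![s, t] i = ∏ k ∈ s, q k := by
  simp [inNegProb_pair, hs, ht, sum_healthProb_allHealthy]

lemma inNegProb_pair_of_notMem_of_mem (hs : i ∉ s) (ht : i ∈ t) :
    inNegProb q ![s, t] i = ∏ k ∈ t, q k := by
  simp [inNegProb_pair, hs, ht, sum_healthProb_allHealthy]

lemma inNegProb_pair_of_mem_of_mem (hs : i ∈ s) (ht : i ∈ t) :
    inNegProb q ![s, t] i = ∏ k ∈ s, q k + ∏ k ∈ t, q k - ∏ k ∈ s ∪ t, q k := by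
  simp [inNegProb_pair, hs, ht, sum_healthProb_allHealthy_or]

lemma inNegProb_pair_of_notMem_of_notMem (hs : i ∉ s) (ht : i ∉ t) :
    inNegProb q ![s, t] i = 0 := by
  simp [inNegProb_pair, hs, ht]

end PairOfTests

theorem welfare_overlapping_pair {n : ℕ} (q u : Fin n → ℝ) {A B C : Finset (Fin n)}
    (hAB : Disjoint A B) (hAC : Disjoint A C) (hBC : Disjoint B C) :
    welfare q u ![A ∪ C, B ∪ C] =
      (∏ i ∈ C, q i) *
        ((∏ i ∈ A, q i) * (∑ i ∈ A, u i) + (∏ i ∈ B, q i) * (∑ i ∈ B, u i) +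
          ((∏ i ∈ A, q i) + (1 - ∏ i ∈ A, q i) * ∏ i ∈ B, q i) * ∑ i ∈ C, u i) := by
  have hABC : Disjoint (A ∪ B) C := disjoint_union_left.2 ⟨hAC, hBC⟩
  have hsupport : welfare q u ![A ∪ C, B ∪ C] =
      ∑ i ∈ A ∪ B ∪ C, u i * inNegProb q ![A ∪ C, B ∪ C] i := by
    refine (sum_subset (subset_univ _) fun i _ hi => ?_).symm
    simp only [mem_union, not_or] at hi
    rw [inNegProb_pair_of_notMem_of_notMem q (by simp [hi]) (by simp [hi]), mul_zero]
  have hsumA : ∑ i ∈ A, u i * inNegProb q ![A ∪ C, B ∪ C] i =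
      (∏ i ∈ A ∪ C, q i) * ∑ i ∈ A, u i := by
    rw [mul_sum]
    refine sum_congr rfl fun i hi => ?_
    have hiB : i ∉ B := disjoint_left.1 hAB hi
    have hiC : i ∉ C := disjoint_left.1 hAC hi
    rw [inNegProb_pair_of_mem_of_notMem q (by simp [hi]) (by simp [hiB, hiC]), mul_comm]
  have hsumB : ∑ i ∈ B, u i * inNegProb q ![A ∪ C, B ∪ C] i =
      (∏ i ∈ B ∪ C, q i) * ∑ i ∈ B, u i := by
    rw [mul_sum]
    refine sum_congr rfl fun i hi => ?_
    have hiA : i ∉ A := disjoint_right.1 hAB hi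
    have hiC : i ∉ C := disjoint_left.1 hBC hi
    rw [inNegProb_pair_of_notMem_of_mem q (by simp [hiA, hiC]) (by simp [hi]), mul_comm]
  have hsumC : ∑ i ∈ C, u i * inNegProb q ![A ∪ C, B ∪ C] i =
      (∏ i ∈ A ∪ C, q i + ∏ i ∈ B ∪ C, q i - ∏ i ∈ (A ∪ C) ∪ (B ∪ C), q i) * ∑ i ∈ C, u i := by
    rw [mul_sum]
    refine sum_congr rfl fun i hi => ?_
    rw [inNegProb_pair_of_mem_of_mem q (by simp [hi]) (by simp [hi]), mul_comm]
  have hunion : (A ∪ C) ∪ (B ∪ C) = (A ∪ B) ∪ C := union_union_distrib_right A B C |>.symm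
  rw [hsupport, sum_union hABC, sum_union hAB, hsumA, hsumB, hsumC, hunion,
    prod_union hAC, prod_union hBC, prod_union hABC, prod_union hAB]
  ring

/-- Part 1: for disjoint pools `A`, `B`, `C`, the welfare of the overlapping regime
`(A ∪ C, B ∪ C)` equals `q_C (q_A u_A + q_B u_B + (q_A + (1 - q_A) q_B) u_C)`.
Part 2: for each of the four non-overlapping alternatives, the ratio of the overlapping
welfare to the alternative welfare is a non-decreasing function of `q_C` on `[0,1]`,
so the worst-case ratio is attained at `q_C = 1`. -/
theorem stmt11 :
    (∀ (n : ℕ) (q u : Fin n → ℝ), (∀ i, 0 ≤ q i ∧ q i ≤ 1) → (∀ i, 0 ≤ u i) →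
      ∀ A B C : Finset (Fin n), Disjoint A B → Disjoint A C → Disjoint B C →
        welfare q u ![A ∪ C, B ∪ C] =
          (∏ i ∈ C, q i) *
            ((∏ i ∈ A, q i) * (∑ i ∈ A, u i) + (∏ i ∈ B, q i) * (∑ i ∈ B, u i) +
              ((∏ i ∈ A, q i) + (1 - ∏ i ∈ A, q i) * ∏ i ∈ B, q i) * ∑ i ∈ C, u i)) ∧
    (∀ qA qB uA uB uC : ℝ,
      0 ≤ qA → qA ≤ 1 → 0 ≤ qB → qB ≤ 1 → 0 ≤ uA → 0 ≤ uB → 0 ≤ uC →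
      ∀ c c' : ℝ, 0 ≤ c → c ≤ c' → c' ≤ 1 →
        ((c * (qA * uA + qB * uB + (qA + (1 - qA) * qB) * uC)) /
            (c * qA * uA + qB * uB + c * qA * uC) ≤
          (c' * (qA * uA + qB * uB + (qA + (1 - qA) * qB) * uC)) /
            (c' * qA * uA + qB * uB + c' * qA * uC)) ∧
        ((c * (qA * uA + qB * uB + (qA + (1 - qA) * qB) * uC)) /
            (qA * uA + c * uC) ≤
          (c' * (qA * uA + qB * uB + (qA + (1 - qA) * qB) * uC)) /
            (qA * uA + c' * uC)) ∧
        ((c * (qA * uA + qB * uB + (qA + (1 - qA) * qB) * uC)) /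
            (qB * uB + c * uC) ≤
          (c' * (qA * uA + qB * uB + (qA + (1 - qA) * qB) * uC)) /
            (qB * uB + c' * uC)) ∧
        ((c * (qA * uA + qB * uB + (qA + (1 - qA) * qB) * uC)) /
            (qA * qB * (uA + uB) + c * uC) ≤
          (c' * (qA * uA + qB * uB + (qA + (1 - qA) * qB) * uC)) /
            (qA * qB * (uA + uB) + c' * uC))) := by
  refine ⟨fun n q u _ _ A B C hAB hAC hBC => welfare_overlapping_pair q u hAB hAC hBC, ?_⟩
  intro qA qB uA uB uC hqA hqA1 hqB _ huA huB huC c c' hc hcc' _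
  set K := qA * uA + qB * uB + (qA + (1 - qA) * qB) * uC
  have hK : 0 ≤ K := by
    have := mul_nonneg (mul_nonneg (sub_nonneg.2 hqA1) hqB) huC
    linarith [mul_nonneg hqA huA, mul_nonneg hqB huB, mul_nonneg hqA huC]
  have mono : ∀ a b : ℝ, 0 ≤ a → 0 ≤ b → c * K / (a + b * c) ≤ c' * K / (a + b * c') :=
    fun a b ha hb => monotoneOn_mul_div_add_mul K a b hK ha hb hc (hc.trans hcc') hcc'
  refine ⟨?_, ?_, ?_, ?_⟩
  · convert mono (qB * uB) (qA * uA + qA * uC) (by positivity) (by positivity) using 2 <;> ring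
  · convert mono (qA * uA) uC (by positivity) huC using 2 <;> ring
  · convert mono (qB * uB) uC (by positivity) huC using 2 <;> ring
  · convert mono (qA * qB * (uA + uB)) uC (by positivity) huC using 2 <;> ring
end
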